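/- arXiv:0902.4207 — 8 statements merged into one kernel-verified Lean document; each statement's English description precedes it below -/
import Mathlib

section
/- A quadratic stochastic operator V is Volterra (i.e., P_{ij,k} = 0 whenever k ∉ {i,j}) if and only if it has the form x'_k = x_k(1 + Σ_i a_{ki} x_i) where a_{ki} = 2P_{ik,k} − 1 for i ≠ k, a_{kk} = 0, and the matrix (a_{ki}) is skew-symmetric with |a_{ki}| ≤ 1. -/
/-!
Under the Volterra condition only the terms with `i = k` or `j = k` survive in
`x'_k = ∑_{i,j} P_{ij,k} x_i x_j`, so by symmetry and `P_{kk,k} = 1` one gets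
`x'_k = x_k (2 ∑_i P_{ik,k} x_i - x_k)`, which is the canonical form on the simplex
`∑_i x_i = 1`. The normalisation `P_{ik,i} + P_{ik,k} = 1` makes `a` skew-symmetric.
Conversely, at the midpoint of the vertices `e_i`, `e_j` the canonical form gives `x'_k = 0` for
`k ∉ {i, j}`, and a vanishing sum of nonnegative terms forces `P_{ij,k} = 0`.
-/

open Finset

variable {ι R : Type*}

def IsVolterra [Zero R] (P : ι → ι → ι → R) : Prop :=
  ∀ i j k, k ≠ i → k ≠ j → P i j k = 0

/-- The coefficient `a_{ki}` of the canonical form `x'_k = x_k (1 + ∑_i a_{ki} x_i)`. -/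
def volterraCoeff [DecidableEq ι] [Ring R] (P : ι → ι → ι → R) (k i : ι) : R :=
  if i = k then 0 else 2 * P i k k - 1

section Ring

variable [DecidableEq ι] [Ring R]

@[simp]
theorem volterraCoeff_self (P : ι → ι → ι → R) (k : ι) : volterraCoeff P k k = 0 := by
  simp [volterraCoeff]

theorem volterraCoeff_of_ne (P : ι → ι → ι → R) {k i : ι} (h : i ≠ k) :
    volterraCoeff P k i = 2 * P i k k - 1 := by
  simp [volterraCoeff, h]

end Ring

namespace IsVolterra

variable [Fintype ι]

theorem apply_self_self_self [AddCommMonoid R] [One R] {P : ι → ι → ι → R} (hvol : IsVolterra P)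
    (hsum : ∀ i j, ∑ k, P i j k = 1) (k : ι) : P k k k = 1 := by
  rw [← hsum k k, sum_eq_single k (fun t _ ht => hvol k k t ht ht) (by simp)]

theorem apply_left_add_apply_right [DecidableEq ι] [AddCommMonoid R] [One R] {P : ι → ι → ι → R}
    (hvol : IsVolterra P) (hsum : ∀ i j, ∑ k, P i j k = 1) {i j : ι} (hij : i ≠ j) :
    P i j i + P i j j = 1 := by
  rw [← hsum i j, ← sum_pair hij]
  exact sum_subset (subset_univ _) fun t _ ht => by
    simp only [mem_insert, mem_singleton, not_or] at ht
    exact hvol i j t ht.1 ht.2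

/-- Inclusion–exclusion over the terms with `i = k` or `j = k`. -/
theorem sum_sum_mul_mul [DecidableEq ι] [CommRing R] {P : ι → ι → ι → R} (hvol : IsVolterra P)
    (hsym : ∀ i j k, P i j k = P j i k) (x : ι → R) (k : ι) :
    ∑ i, ∑ j, P i j k * x i * x j = x k * (2 * ∑ i, P i k k * x i - P k k k * x k) := by
  have hterm : ∀ i j, P i j k * x i * x j =
      (if j = k then P i k k * x i * x k else 0) + (if i = k then P j k k * x j * x k else 0)
        - (if i = k then if j = k then P k k k * x k * x k else 0 else 0) := by
    intro i j
    by_cases hi : i = k <;> by_cases hj : j = k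
    · simp [hi, hj]
    · simp [hi, hj, hsym k j k]; ring
    · simp [hi, hj]
    · simp [hi, hj, hvol i j k (Ne.symm hi) (Ne.symm hj)]
  rw [Fintype.sum_congr _ _ fun i => Fintype.sum_congr _ _ fun j => hterm i j]
  simp only [sum_sub_distrib, sum_add_distrib, sum_ite_irrel, sum_const_zero, sum_ite_eq',
    mem_univ, if_true, ← sum_mul]
  ring

theorem volterraCoeff_antisymm [DecidableEq ι] [CommRing R] {P : ι → ι → ι → R} (hvol : IsVolterra P)
    (hsym : ∀ i j k, P i j k = P j i k) (hsum : ∀ i j, ∑ k, P i j k = 1) (k i : ι) :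
    volterraCoeff P k i = -volterraCoeff P i k := by
  rcases eq_or_ne i k with rfl | h
  · simp
  · rw [volterraCoeff_of_ne P h, volterraCoeff_of_ne P h.symm, hsym k i i]
    linear_combination 2 * hvol.apply_left_add_apply_right hsum h

end IsVolterra

section Canonical

variable [Fintype ι] [DecidableEq ι] [CommRing R]

theorem one_add_sum_volterraCoeff_mul (P : ι → ι → ι → R) {x : ι → R} (hx : ∑ i, x i = 1)
    (k : ι) :
    1 + ∑ i, volterraCoeff P k i * x i = 2 * ∑ i, P i k k * x i - (2 * P k k k - 1) * x k := by
  have h : ∀ i, volterraCoeff P k i * x i =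
      (2 * P i k k - 1) * x i - if i = k then (2 * P k k k - 1) * x k else 0 := by
    intro i
    rcases eq_or_ne i k with rfl | h
    · simp
    · simp [volterraCoeff_of_ne P h, h]
  simp only [h, sum_sub_distrib, sum_ite_eq', mem_univ, if_true, sub_mul, one_mul, mul_assoc, ← mul_sum, hx]
  ring

theorem IsVolterra.sum_sum_mul_mul_eq_canonical {P : ι → ι → ι → R} (hvol : IsVolterra P)
    (hsym : ∀ i j k, P i j k = P j i k) (hsum : ∀ i j, ∑ k, P i j k = 1)
    {x : ι → R} (hx : ∑ i, x i = 1) (k : ι) :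
    ∑ i, ∑ j, P i j k * x i * x j = x k * (1 + ∑ i, volterraCoeff P k i * x i) := by
  rw [hvol.sum_sum_mul_mul hsym, one_add_sum_volterraCoeff_mul P hx,
    hvol.apply_self_self_self hsum]
  ring

end Canonical

section Ordered

variable [Fintype ι] [Field R] [LinearOrder R] [IsStrictOrderedRing R] {P : ι → ι → ι → R}

theorem apply_le_one (hpos : ∀ i j k, 0 ≤ P i j k) (hsum : ∀ i j, ∑ k, P i j k = 1)
    (i j k : ι) : P i j k ≤ 1 :=
  hsum i j ▸ single_le_sum (fun t _ => hpos i j t) (mem_univ k)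

theorem abs_volterraCoeff_le_one [DecidableEq ι] (hpos : ∀ i j k, 0 ≤ P i j k)
    (hsum : ∀ i j, ∑ k, P i j k = 1) (k i : ι) : |volterraCoeff P k i| ≤ 1 := by
  rcases eq_or_ne i k with rfl | h
  · simp
  · rw [volterraCoeff_of_ne P h, abs_le]
    constructor <;> linarith [hpos i k k, apply_le_one hpos hsum i k k]

theorem apply_eq_zero_of_sum_sum_mul_mul_eq_zero (hpos : ∀ i j k, 0 ≤ P i j k)
    {x : ι → R} (hx : ∀ i, 0 ≤ x i) {k : ι} (h : ∑ i, ∑ j, P i j k * x i * x j = 0)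
    {i j : ι} (hi : 0 < x i) (hj : 0 < x j) : P i j k = 0 := by
  have hterm : ∀ i j, 0 ≤ P i j k * x i * x j := fun i j =>
    mul_nonneg (mul_nonneg (hpos i j k) (hx i)) (hx j)
  have hrow := (sum_eq_zero_iff_of_nonneg fun i _ => sum_nonneg fun j _ => hterm i j).mp h i
    (mem_univ i)
  have hij := (sum_eq_zero_iff_of_nonneg fun j _ => hterm i j).mp hrow j (mem_univ j)
  simpa [hi.ne', hj.ne'] using hij

theorem isVolterra_of_canonical_form [DecidableEq ι] (hpos : ∀ i j k, 0 ≤ P i j k)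
    (a : ι → ι → R)
    (ha : ∀ x : ι → R, ((∀ i, 0 ≤ x i) ∧ ∑ i, x i = 1) →
      ∀ k, ∑ i, ∑ j, P i j k * x i * x j = x k * (1 + ∑ i, a k i * x i)) :
    IsVolterra P := by
  intro i j k hki hkj
  set x : ι → R := fun t => (if t = i then 2⁻¹ else 0) + if t = j then 2⁻¹ else 0
  have hx_nonneg : ∀ t, 0 ≤ x t := fun t => by positivity
  have hx_sum : ∑ t, x t = 1 := by
    simp only [x, sum_add_distrib, sum_ite_eq', mem_univ, if_true]
    norm_num
  have hxi : 0 < x i := add_pos_of_pos_of_nonneg (by simp) (by positivity)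
  have hxj : 0 < x j := add_pos_of_nonneg_of_pos (by positivity) (by simp)
  have hxk : x k = 0 := by simp [x, hki, hkj]
  refine apply_eq_zero_of_sum_sum_mul_mul_eq_zero hpos hx_nonneg ?_ hxi hxj
  rw [ha x ⟨hx_nonneg, hx_sum⟩ k, hxk, zero_mul]

end Ordered

/-- A QSO is Volterra iff it has the form
`x'_k = x_k (1 + ∑_i a_{ki} x_i)` with `a_{ki} = 2 P_{ik,k} - 1` (for `i ≠ k`),
`a_{kk} = 0`, `(a_{ki})` skew-symmetric and `|a_{ki}| ≤ 1`. -/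
theorem volterra_iff_canonical_form (m : ℕ)
    (P : Fin m → Fin m → Fin m → ℝ)
    (hpos : ∀ i j k, 0 ≤ P i j k)
    (hsym : ∀ i j k, P i j k = P j i k)
    (hsum : ∀ i j, ∑ k, P i j k = 1) :
    (∀ i j k : Fin m, k ≠ i → k ≠ j → P i j k = 0) ↔
    (∃ a : Fin m → Fin m → ℝ,
      (∀ k i : Fin m, i ≠ k → a k i = 2 * P i k k - 1) ∧
      (∀ k : Fin m, a k k = 0) ∧
      (∀ k i : Fin m, a k i = - a i k) ∧
      (∀ k i : Fin m, |a k i| ≤ 1) ∧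
      (∀ x : Fin m → ℝ, ((∀ i, 0 ≤ x i) ∧ ∑ i, x i = 1) →
        ∀ k, ∑ i, ∑ j, P i j k * x i * x j = x k * (1 + ∑ i, a k i * x i))) := by
  constructor
  · intro hvol
    exact ⟨volterraCoeff P, fun k i => volterraCoeff_of_ne P, volterraCoeff_self P,
      IsVolterra.volterraCoeff_antisymm hvol hsym hsum, abs_volterraCoeff_le_one hpos hsum,
      fun x hx => IsVolterra.sum_sum_mul_mul_eq_canonical hvol hsym hsum hx.2⟩
  · rintro ⟨a, -, -, -, -, ha⟩
    exact isVolterra_of_canonical_form hpos a ha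
end

section
/- For a Volterra QSO on the 2-dimensional simplex of the form x' = x(1+ay−bz), y' = y(1−ax+cz), z' = z(1+bx−cy) with a,b,c ∈ (0,1] all of the same sign (all positive), the interior fixed point exists and is unique, and the function φ(u) = u_1^{p_1} u_2^{p_2} u_3^{p_3} with (p_1,p_2,p_3) proportional to (c,b,a) is constant exactly on a family of level curves containing the fixed point. -/
/-!
The interior fixed point solves the linear system `a y = b z`, `a x = c z` on the simplex,
whose only solution is `(c, b, a) / (a + b + c)`.  Writing `p` for this point, the quotient
`φ u / φ p = ∏ (uᵢ / pᵢ) ^ pᵢ` is a weighted geometric mean of the `uᵢ / pᵢ`, whose weighted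
arithmetic mean is `∑ uᵢ = 1`; by AM-GM it is at most `1`, with equality only when every
`uᵢ / pᵢ` equals `1`.  Hence `p` is the strict maximum of `φ` on the open simplex.
-/

open Finset

namespace Real

variable {ι : Type*} {s : Finset ι} {w u : ι → ℝ}

theorem prod_div_rpow_self_eq (hw : ∀ i ∈ s, 0 < w i) (hu : ∀ i ∈ s, 0 ≤ u i) :
    ∏ i ∈ s, (u i / w i) ^ w i = (∏ i ∈ s, u i ^ w i) / ∏ i ∈ s, w i ^ w i := by
  rw [← prod_div_distrib]
  exact prod_congr rfl fun i hi => div_rpow (hu i hi) (hw i hi).le _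

theorem sum_mul_div_self_eq (hw : ∀ i ∈ s, 0 < w i) :
    ∑ i ∈ s, w i * (u i / w i) = ∑ i ∈ s, u i :=
  sum_congr rfl fun i hi => mul_div_cancel₀ _ (hw i hi).ne'

/-- Gibbs' inequality, in multiplicative form. -/
theorem prod_rpow_le_prod_rpow_self (hw : ∀ i ∈ s, 0 < w i) (hw₁ : ∑ i ∈ s, w i = 1)
    (hu : ∀ i ∈ s, 0 ≤ u i) (hu₁ : ∑ i ∈ s, u i = 1) :
    ∏ i ∈ s, u i ^ w i ≤ ∏ i ∈ s, w i ^ w i := by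
  have hpos : 0 < ∏ i ∈ s, w i ^ w i := prod_pos fun i hi => rpow_pos_of_pos (hw i hi) _
  have h := geom_mean_le_arith_mean_weighted s w (fun i => u i / w i)
    (fun i hi => (hw i hi).le) hw₁ fun i hi => div_nonneg (hu i hi) (hw i hi).le
  rwa [prod_div_rpow_self_eq hw hu, sum_mul_div_self_eq hw, hu₁, div_le_one hpos] at h

theorem prod_rpow_eq_prod_rpow_self_iff (hw : ∀ i ∈ s, 0 < w i) (hw₁ : ∑ i ∈ s, w i = 1)
    (hu : ∀ i ∈ s, 0 ≤ u i) (hu₁ : ∑ i ∈ s, u i = 1) :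
    ∏ i ∈ s, u i ^ w i = ∏ i ∈ s, w i ^ w i ↔ ∀ i ∈ s, u i = w i := by
  have hpos : 0 < ∏ i ∈ s, w i ^ w i := prod_pos fun i hi => rpow_pos_of_pos (hw i hi) _
  have h := geom_mean_eq_arith_mean_weighted_iff_of_pos' s w (fun i => u i / w i) hw hw₁
    fun i hi => div_nonneg (hu i hi) (hw i hi).le
  rw [prod_div_rpow_self_eq hw hu, sum_mul_div_self_eq hw, hu₁,
    div_eq_one_iff_eq hpos.ne'] at h
  rw [h]
  exact forall₂_congr fun i hi => div_eq_one_iff_eq (hw i hi).ne'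

theorem rpow_mul_rpow_mul_rpow_le_and_eq_iff {w₁ w₂ w₃ x₁ x₂ x₃ : ℝ}
    (hw₁ : 0 < w₁) (hw₂ : 0 < w₂) (hw₃ : 0 < w₃) (hw : w₁ + w₂ + w₃ = 1)
    (hx₁ : 0 ≤ x₁) (hx₂ : 0 ≤ x₂) (hx₃ : 0 ≤ x₃) (hx : x₁ + x₂ + x₃ = 1) :
    x₁ ^ w₁ * x₂ ^ w₂ * x₃ ^ w₃ ≤ w₁ ^ w₁ * w₂ ^ w₂ * w₃ ^ w₃ ∧
      (x₁ ^ w₁ * x₂ ^ w₂ * x₃ ^ w₃ = w₁ ^ w₁ * w₂ ^ w₂ * w₃ ^ w₃ ↔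
        x₁ = w₁ ∧ x₂ = w₂ ∧ x₃ = w₃) := by
  have hw' : ∀ i ∈ univ, 0 < ![w₁, w₂, w₃] i := by simp [Fin.forall_fin_succ, *]
  have hx' : ∀ i ∈ univ, 0 ≤ ![x₁, x₂, x₃] i := by simp [Fin.forall_fin_succ, *]
  have hw₁' : ∑ i, ![w₁, w₂, w₃] i = 1 := by simp [Fin.sum_univ_three, hw]
  have hx₁' : ∑ i, ![x₁, x₂, x₃] i = 1 := by simp [Fin.sum_univ_three, hx]
  have hle := prod_rpow_le_prod_rpow_self hw' hw₁' hx' hx₁'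
  have heq := prod_rpow_eq_prod_rpow_self_iff hw' hw₁' hx' hx₁'
  simp only [Fin.prod_univ_three, Fin.forall_fin_succ, mem_univ, forall_const,
    Matrix.cons_val_zero, Matrix.cons_val_one, Matrix.cons_val, Matrix.cons_val_succ,
    Matrix.cons_val_fin_one] at hle heq
  exact ⟨hle, heq⟩

end Real

theorem balance_of_volterra_fixed {a b c x y z : ℝ} (hx : x ≠ 0) (hy : y ≠ 0)
    (h₁ : x * (1 + a * y - b * z) = x) (h₂ : y * (1 - a * x + c * z) = y) :
    a * y = b * z ∧ a * x = c * z := by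
  rw [mul_eq_left₀ hx] at h₁
  rw [mul_eq_left₀ hy] at h₂
  constructor <;> linarith

theorem eq_div_sum_of_balance {a b c x y z : ℝ} (ha : a ≠ 0) (hs : a + b + c ≠ 0)
    (hsum : x + y + z = 1) (hyz : a * y = b * z) (hxz : a * x = c * z) :
    x = c / (a + b + c) ∧ y = b / (a + b + c) ∧ z = a / (a + b + c) := by
  have hz : z * (a + b + c) = a := by linear_combination a * hsum - hyz - hxz
  refine ⟨?_, ?_, (eq_div_iff hs).2 hz⟩ <;> rw [eq_div_iff hs] <;> apply mul_left_cancel₀ ha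
  · linear_combination (a + b + c) * hxz + c * hz
  · linear_combination (a + b + c) * hyz + b * hz

theorem volterra_S2_interior_fixed_point_and_level_curves_general
    (a b c : ℝ) (ha : 0 < a) (hb : 0 < b) (hc : 0 < c)
    (V : ℝ × ℝ × ℝ → ℝ × ℝ × ℝ)
    (hV : ∀ u : ℝ × ℝ × ℝ,
      V u = (u.1 * (1 + a * u.2.1 - b * u.2.2),
             u.2.1 * (1 - a * u.1 + c * u.2.2),
             u.2.2 * (1 + b * u.1 - c * u.2.1)))
    (intS2 : ℝ × ℝ × ℝ → Prop)
    (hint : ∀ u : ℝ × ℝ × ℝ,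
      intS2 u ↔ 0 < u.1 ∧ 0 < u.2.1 ∧ 0 < u.2.2 ∧ u.1 + u.2.1 + u.2.2 = 1)
    (φ : ℝ × ℝ × ℝ → ℝ)
    (hφ : ∀ u : ℝ × ℝ × ℝ,
      φ u = u.1 ^ (c / (a + b + c)) * u.2.1 ^ (b / (a + b + c)) *
            u.2.2 ^ (a / (a + b + c))) :
    (intS2 (c / (a + b + c), b / (a + b + c), a / (a + b + c)) ∧
      V (c / (a + b + c), b / (a + b + c), a / (a + b + c)) =
        (c / (a + b + c), b / (a + b + c), a / (a + b + c))) ∧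
    (∀ u : ℝ × ℝ × ℝ, intS2 u → V u = u →
      u = (c / (a + b + c), b / (a + b + c), a / (a + b + c))) ∧
    (∀ u : ℝ × ℝ × ℝ, intS2 u →
      φ u ≤ φ (c / (a + b + c), b / (a + b + c), a / (a + b + c)) ∧
      (φ u = φ (c / (a + b + c), b / (a + b + c), a / (a + b + c)) ↔
        u = (c / (a + b + c), b / (a + b + c), a / (a + b + c)))) := by
  have hs : 0 < a + b + c := by positivity
  have hp₁ : 0 < c / (a + b + c) := by positivity
  have hp₂ : 0 < b / (a + b + c) := by positivity
  have hp₃ : 0 < a / (a + b + c) := by positivity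
  have hp : c / (a + b + c) + b / (a + b + c) + a / (a + b + c) = 1 := by field_simp; ring
  refine ⟨⟨(hint _).2 ⟨hp₁, hp₂, hp₃, hp⟩, ?_⟩, ?_, ?_⟩
  · rw [hV]
    refine Prod.ext ?_ (Prod.ext ?_ ?_) <;> dsimp only <;> ring
  · rintro ⟨x, y, z⟩ hu hfix
    obtain ⟨hx, hy, -, hsum⟩ := (hint _).1 hu
    rw [hV, Prod.mk.injEq, Prod.mk.injEq] at hfix
    obtain ⟨hyz, hxz⟩ := balance_of_volterra_fixed hx.ne' hy.ne' hfix.1 hfix.2.1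
    obtain ⟨rfl, rfl, rfl⟩ := eq_div_sum_of_balance ha.ne' hs.ne' hsum hyz hxz
    rfl
  · rintro ⟨x, y, z⟩ hu
    obtain ⟨hx, hy, hz, hsum⟩ := (hint _).1 hu
    rw [hφ, hφ, Prod.mk.injEq, Prod.mk.injEq]
    exact Real.rpow_mul_rpow_mul_rpow_le_and_eq_iff hp₁ hp₂ hp₃ hp hx.le hy.le hz.le hsum

/-- For the Volterra QSO `x' = x(1+ay-bz)`, `y' = y(1-ax+cz)`,
`z' = z(1+bx-cy)` on `S^2` with `a,b,c ∈ (0,1]`, the interior fixed point exists,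
is unique and equals `(c,b,a)/(a+b+c)`, and the function
`φ(u) = u₁^{p₁} u₂^{p₂} u₃^{p₃}` with `(p₁,p₂,p₃) = (c,b,a)/(a+b+c)` is constant
exactly on a family of level curves containing the fixed point: the level set of `φ`
through the fixed point is the singleton of the fixed point (it is the strict maximum),
every other interior point lying on a lower level curve. -/
theorem volterra_S2_interior_fixed_point_and_level_curves
    (a b c : ℝ) (ha : 0 < a) (ha1 : a ≤ 1) (hb : 0 < b) (hb1 : b ≤ 1)
    (hc : 0 < c) (hc1 : c ≤ 1)
    (V : ℝ × ℝ × ℝ → ℝ × ℝ × ℝ)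
    (hV : ∀ u : ℝ × ℝ × ℝ,
      V u = (u.1 * (1 + a * u.2.1 - b * u.2.2),
             u.2.1 * (1 - a * u.1 + c * u.2.2),
             u.2.2 * (1 + b * u.1 - c * u.2.1)))
    (intS2 : ℝ × ℝ × ℝ → Prop)
    (hint : ∀ u : ℝ × ℝ × ℝ,
      intS2 u ↔ 0 < u.1 ∧ 0 < u.2.1 ∧ 0 < u.2.2 ∧ u.1 + u.2.1 + u.2.2 = 1)
    (φ : ℝ × ℝ × ℝ → ℝ)
    (hφ : ∀ u : ℝ × ℝ × ℝ,
      φ u = u.1 ^ (c / (a + b + c)) * u.2.1 ^ (b / (a + b + c)) *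
            u.2.2 ^ (a / (a + b + c))) :
    (intS2 (c / (a + b + c), b / (a + b + c), a / (a + b + c)) ∧
      V (c / (a + b + c), b / (a + b + c), a / (a + b + c)) =
        (c / (a + b + c), b / (a + b + c), a / (a + b + c))) ∧
    (∀ u : ℝ × ℝ × ℝ, intS2 u → V u = u →
      u = (c / (a + b + c), b / (a + b + c), a / (a + b + c))) ∧
    (∀ u : ℝ × ℝ × ℝ, intS2 u →
      φ u ≤ φ (c / (a + b + c), b / (a + b + c), a / (a + b + c)) ∧
      (φ u = φ (c / (a + b + c), b / (a + b + c), a / (a + b + c)) ↔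
        u = (c / (a + b + c), b / (a + b + c), a / (a + b + c)))) :=
  volterra_S2_interior_fixed_point_and_level_curves_general a b c ha hb hc V hV intS2 hint φ hφ
end

section
/- Every F-quadratic stochastic operator has (1,0,...,0) ∈ S^m as a fixed point, and for every initial point x^0 ∈ S^m the trajectory x^{(n)} converges to (1,0,...,0); moreover the convergence is exponentially fast in the sense that 1 − x_0^{(n)} ≤ C q^n for some 0 < q < 1. -/
open Filter

open Finset in

lemma Fqso_simplex_step (m : ℕ)
    (P : Fin (m + 1) → Fin (m + 1) → Fin (m + 1) → ℝ)
    (hpos : ∀ i j k, 0 ≤ P i j k)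
    (hsum : ∀ i j, ∑ k, P i j k = 1)
    (y : Fin (m+1) → ℝ) (hy1 : ∀ i, 0 ≤ y i) (hy2 : ∑ i, y i = 1) :
    (∀ k, 0 ≤ ∑ i, ∑ j, P i j k * y i * y j) ∧
    (∑ k, ∑ i, ∑ j, P i j k * y i * y j) = 1 := by
  constructor
  · intro k
    apply Finset.sum_nonneg; intro i _
    apply Finset.sum_nonneg; intro j _
    have h1 := hpos i j k; have h2 := hy1 i; have h3 := hy1 j; positivity
  · calc ∑ k, ∑ i, ∑ j, P i j k * y i * y j
        = ∑ i, ∑ j, ∑ k, P i j k * y i * y j := by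
          rw [Finset.sum_comm]
          exact Finset.sum_congr rfl fun i _ => Finset.sum_comm
      _ = ∑ i, ∑ j, y i * y j := by
          refine Finset.sum_congr rfl fun i _ => Finset.sum_congr rfl fun j _ => ?_
          rw [← Finset.sum_mul, ← Finset.sum_mul, hsum, one_mul]
      _ = (∑ i, y i) * (∑ j, y j) := (Finset.sum_mul_sum _ _ _ _).symm
      _ = 1 := by rw [hy2, one_mul]

open Finset in
lemma Fqso_contraction (m : ℕ)
    (F : Finset (Fin (m + 1))) (hF : (0 : Fin (m + 1)) ∉ F)
    (P : Fin (m + 1) → Fin (m + 1) → Fin (m + 1) → ℝ)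
    (hpos : ∀ i j k, 0 ≤ P i j k)
    (hFcond : ∀ i j : Fin (m + 1),
      (((i ∈ F ∨ i = 0) ∧ (j ∈ F ∨ j = 0)) ∨ (i ∉ F ∧ j ∉ F)) →
      (P i j 0 = 1 ∧ ∀ k, k ≠ 0 → P i j k = 0))
    (y : Fin (m+1) → ℝ) (hy1 : ∀ i, 0 ≤ y i) (hy2 : ∑ i, y i = 1) :
    1 - (∑ i, ∑ j, P i j 0 * y i * y j) ≤ (1 - y 0)^2 / 2 := by
  set χF : Fin (m+1) → ℝ := fun i => if i ∈ F then y i else 0 with hχF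
  set χM : Fin (m+1) → ℝ := fun i => if i ∉ F ∧ i ≠ 0 then y i else 0 with hχM
  have hχFnn : ∀ i, 0 ≤ χF i := fun i => by
    simp only [hχF]; split; · exact hy1 i
    · exact le_rfl
  have hχMnn : ∀ i, 0 ≤ χM i := fun i => by
    simp only [hχM]; split; · exact hy1 i
    · exact le_rfl
  have h1 : 1 - (∑ i, ∑ j, P i j 0 * y i * y j)
      = ∑ i, ∑ j, (1 - P i j 0) * (y i * y j) := by
    have e : ∀ i : Fin (m+1), ∀ j : Fin (m+1),
        (1 - P i j 0) * (y i * y j) = y i * y j - P i j 0 * y i * y j := by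
      intros; ring
    simp_rw [e, Finset.sum_sub_distrib]
    have e2 : ∑ i, ∑ j, y i * y j = 1 := by
      rw [← Finset.sum_mul_sum, hy2, one_mul]
    rw [e2]
  have hterm : ∀ i j : Fin (m+1),
      (1 - P i j 0) * (y i * y j) ≤ χF i * χM j + χM i * χF j := by
    intro i j
    by_cases hC : (((i ∈ F ∨ i = 0) ∧ (j ∈ F ∨ j = 0)) ∨ (i ∉ F ∧ j ∉ F))
    · have := (hFcond i j hC).1
      rw [this]
      have := mul_nonneg (hχFnn i) (hχMnn j)
      have := mul_nonneg (hχMnn i) (hχFnn j)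
      nlinarith
    · have hcase : (i ∈ F ∧ j ∉ F ∧ j ≠ 0) ∨ (j ∈ F ∧ i ∉ F ∧ i ≠ 0) := by
        by_cases hi : i ∈ F <;> by_cases hj : j ∈ F <;>
          by_cases hi0 : i = 0 <;> by_cases hj0 : j = 0 <;> tauto
      have hyy : 0 ≤ y i * y j := mul_nonneg (hy1 i) (hy1 j)
      have hle : (1 - P i j 0) * (y i * y j) ≤ y i * y j := by
        nlinarith [hpos i j 0]
      rcases hcase with ⟨hi, hj1, hj2⟩ | ⟨hj, hi1, hi2⟩
      · have e1 : χF i = y i := by simp [hχF, hi]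
        have e2 : χM j = y j := by simp [hχM, hj1, hj2]
        rw [e1, e2]
        nlinarith [mul_nonneg (hχMnn i) (hχFnn j)]
      · have e1 : χM i = y i := by simp [hχM, hi1, hi2]
        have e2 : χF j = y j := by simp [hχF, hj]
        rw [e1, e2]
        nlinarith [mul_nonneg (hχFnn i) (hχMnn j)]
  have h2 : ∑ i, ∑ j, (1 - P i j 0) * (y i * y j)
      ≤ (∑ i, χF i) * (∑ j, χM j) + (∑ i, χM i) * (∑ j, χF j) := by
    calc ∑ i, ∑ j, (1 - P i j 0) * (y i * y j)
        ≤ ∑ i, ∑ j, (χF i * χM j + χM i * χF j) :=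
          Finset.sum_le_sum fun i _ => Finset.sum_le_sum fun j _ => hterm i j
      _ = (∑ i, χF i) * (∑ j, χM j) + (∑ i, χM i) * (∑ j, χF j) := by
          simp_rw [Finset.sum_add_distrib, ← Finset.sum_mul_sum]
  set a := ∑ i, χF i with ha
  set b := ∑ i, χM i with hb
  have hab : a + b = 1 - y 0 := by
    have e : ∀ i : Fin (m+1), χF i + χM i = if i = 0 then 0 else y i := by
      intro i
      by_cases hi0 : i = 0
      · subst hi0; simp [hχF, hχM, hF]
      · by_cases hi : i ∈ F <;> simp [hχF, hχM, hi, hi0]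
    rw [ha, hb, ← Finset.sum_add_distrib]
    simp_rw [e]
    have : ∑ i : Fin (m+1), (if i = 0 then (0:ℝ) else y i)
        = ∑ i, y i - ∑ i : Fin (m+1), (if i = 0 then y i else 0) := by
      rw [← Finset.sum_sub_distrib]
      refine Finset.sum_congr rfl fun i _ => ?_
      split <;> ring
    rw [this, hy2, Finset.sum_ite_eq' Finset.univ 0 y]
    simp
  have he : (1 : ℝ) - y 0 = a + b := hab.symm
  rw [h1, he]
  nlinarith [sq_nonneg (a - b)]

/-- Every F-QSO has `(1,0,...,0) ∈ S^m` as a fixed point, every trajectory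
converges to it, and the convergence is exponentially fast: `1 - x₀^{(n)} ≤ C qⁿ`
for some `0 < q < 1`. -/
theorem F_qso_unique_fixed_point_and_exponential_convergence (m : ℕ)
    (F : Finset (Fin (m + 1))) (hF : (0 : Fin (m + 1)) ∉ F)
    (P : Fin (m + 1) → Fin (m + 1) → Fin (m + 1) → ℝ)
    (hpos : ∀ i j k, 0 ≤ P i j k)
    (hsym : ∀ i j k, P i j k = P j i k)
    (hsum : ∀ i j, ∑ k, P i j k = 1)
    -- the F-QSO condition: if `i,j ∈ F ∪ {0}` or `i,j ∈ M ∪ {0}` (where `M = E \ F`),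
    -- then `P_{ij,0} = 1` and `P_{ij,k} = 0` for `k ≠ 0`
    (hFcond : ∀ i j : Fin (m + 1),
      (((i ∈ F ∨ i = 0) ∧ (j ∈ F ∨ j = 0)) ∨ (i ∉ F ∧ j ∉ F)) →
      (P i j 0 = 1 ∧ ∀ k, k ≠ 0 → P i j k = 0))
    (V : (Fin (m + 1) → ℝ) → (Fin (m + 1) → ℝ))
    (hV : ∀ x k, V x k = ∑ i, ∑ j, P i j k * x i * x j) :
    (V (fun k => if k = 0 then 1 else 0) = fun k => if k = 0 then 1 else 0) ∧
    (∀ x : Fin (m + 1) → ℝ, ((∀ i, 0 ≤ x i) ∧ ∑ i, x i = 1) →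
      Tendsto (fun n : ℕ => V^[n] x) atTop (nhds (fun k => if k = 0 then 1 else 0)) ∧
      ∃ C q : ℝ, 0 < q ∧ q < 1 ∧ ∀ n : ℕ, 1 - (V^[n] x) 0 ≤ C * q ^ n) := by
  constructor
  · -- fixed point
    funext k
    rw [hV]
    have : ∀ i : Fin (m+1), ∑ j, P i j k * (if i = 0 then (1:ℝ) else 0) *
        (if j = 0 then (1:ℝ) else 0) = if i = 0 then P i 0 k else 0 := by
      intro i
      by_cases hi : i = 0 <;>
        simp [hi, mul_ite, mul_one, mul_zero, ite_mul, zero_mul, one_mul,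
          Finset.sum_ite_eq' Finset.univ (0 : Fin (m+1))]
    simp_rw [this, Finset.sum_ite_eq' Finset.univ (0 : Fin (m+1))]
    simp only [Finset.mem_univ, if_true]
    have h00 := hFcond 0 0 (Or.inl ⟨Or.inr rfl, Or.inr rfl⟩)
    by_cases hk : k = 0
    · simp [hk, h00.1]
    · simp [hk, h00.2 k hk]
  · intro x hx
    -- simplex invariance along the trajectory
    have hsimp : ∀ n : ℕ, (∀ i, 0 ≤ (V^[n] x) i) ∧ ∑ i, (V^[n] x) i = 1 := by
      intro n
      induction n with
      | zero => simpa using hx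
      | succ n ih =>
        rw [Function.iterate_succ_apply']
        have h := Fqso_simplex_step m P hpos hsum (V^[n] x) ih.1 ih.2
        constructor
        · intro k; rw [hV]; exact h.1 k
        · have e : ∑ i, V (V^[n] x) i
              = ∑ k, ∑ i, ∑ j, P i j k * (V^[n] x) i * (V^[n] x) j :=
            Finset.sum_congr rfl fun k _ => hV _ k
          rw [e]; exact h.2
    -- 0 ≤ s n and s n ≤ 1 where s n = 1 - (V^[n] x) 0
    have hco : ∀ n : ℕ, (V^[n] x) 0 ≤ 1 := by
      intro n
      have := (hsimp n).2
      calc (V^[n] x) 0 ≤ ∑ i, (V^[n] x) i :=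
            Finset.single_le_sum (fun i _ => (hsimp n).1 i) (Finset.mem_univ 0)
        _ = 1 := this
    have hs0 : ∀ n : ℕ, 0 ≤ 1 - (V^[n] x) 0 := fun n => by linarith [hco n]
    have hcontr : ∀ n : ℕ, 1 - (V^[n+1] x) 0 ≤ (1 - (V^[n] x) 0)^2 / 2 := by
      intro n
      rw [Function.iterate_succ_apply', hV]
      exact Fqso_contraction m F hF P hpos hFcond (V^[n] x) (hsimp n).1 (hsimp n).2
    -- exponential bound
    have haux : ∀ n : ℕ, 1 - (V^[n+1] x) 0 ≤ (1/2 : ℝ)^(n+1) := by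
      intro n
      induction n with
      | zero =>
        have h := hcontr 0
        have h1 := hs0 0
        have h2 : 1 - (V^[0] x) 0 ≤ 1 := by
          simp only [Function.iterate_zero_apply]
          linarith [hx.1 0]
        simp only [zero_add] at h ⊢
        nlinarith
      | succ n ih =>
        have h := hcontr (n+1)
        have h1 := hs0 (n+1)
        have hc1 : (1/2 : ℝ)^(n+1) ≤ 1 := by
          apply pow_le_one₀ <;> norm_num
        have hc0 : (0:ℝ) ≤ (1/2 : ℝ)^(n+1) := by positivity
        have hps : (1/2 : ℝ)^(n+2) = (1/2 : ℝ)^(n+1) * (1/2) := by ring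
        nlinarith
    have hbound : ∀ n : ℕ, 1 - (V^[n] x) 0 ≤ 2 * (1/2 : ℝ)^n := by
      intro n
      cases n with
      | zero =>
        simp only [Function.iterate_zero_apply, pow_zero, mul_one]
        linarith [hx.1 0]
      | succ n =>
        have := haux n
        linarith [pow_nonneg (by norm_num : (0:ℝ) ≤ 1/2) (n+1)]
    have hq : Tendsto (fun n : ℕ => 2 * (1/2 : ℝ)^n) atTop (nhds 0) := by
      have := (tendsto_pow_atTop_nhds_zero_of_lt_one (by norm_num : (0:ℝ) ≤ 1/2)
        (by norm_num : (1/2 : ℝ) < 1)).const_mul 2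
      simpa using this
    constructor
    · rw [tendsto_pi_nhds]
      intro k
      by_cases hk : k = 0
      · subst hk
        simp only [if_pos rfl]
        have hlo : Tendsto (fun n : ℕ => 1 - 2 * (1/2 : ℝ)^n) atTop (nhds 1) := by
          have h' := (tendsto_const_nhds (x := (1:ℝ)) (f := atTop (α := ℕ))).sub hq
          simpa using h'
        exact tendsto_of_tendsto_of_tendsto_of_le_of_le hlo tendsto_const_nhds
          (fun n => by linarith [hbound n]) (fun n => hco n)
      · simp only [if_neg hk]
        have hub : ∀ n : ℕ, (V^[n] x) k ≤ 2 * (1/2 : ℝ)^n := by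
          intro n
          have h1 : (V^[n] x) k ≤ ∑ i ∈ Finset.univ.erase 0, (V^[n] x) i :=
            Finset.single_le_sum (fun i _ => (hsimp n).1 i)
              (Finset.mem_erase.mpr ⟨hk, Finset.mem_univ k⟩)
          have h2 : (V^[n] x) 0 + ∑ i ∈ Finset.univ.erase 0, (V^[n] x) i = 1 := by
            rw [Finset.add_sum_erase _ _ (Finset.mem_univ 0)]
            exact (hsimp n).2
          linarith [hbound n]
        exact tendsto_of_tendsto_of_tendsto_of_le_of_le tendsto_const_nhds hq
          (fun n => (hsimp n).1 k) hub
    · exact ⟨2, 1/2, by norm_num, by norm_num, hbound⟩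
end

section
/- Every strictly non-Volterra QSO on S^2, given by x' = αy² + cz² + 2yz, y' = ax² + dz² + 2xz, z' = bx² + βy² + 2xy with a+b = c+d = α+β = 1 and all parameters nonnegative, has at least one fixed point in S^2, and no fixed point lies on the boundary ∂S^2. -/
noncomputable def snvPsi (v : ℝ) : ℝ := (3 - Real.sqrt (5 + 4 * v)) / 2

lemma snvPsi_nonneg {v : ℝ} (h0 : 0 ≤ v) (h1 : v ≤ 1) : 0 ≤ snvPsi v := by
  have h3 : Real.sqrt (5 + 4 * v) ≤ 3 := by
    rw [show (3:ℝ) = Real.sqrt 9 by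
      rw [show (9:ℝ) = 3 ^ 2 by norm_num, Real.sqrt_sq (by norm_num)]]
    exact Real.sqrt_le_sqrt (by linarith)
  unfold snvPsi; linarith

lemma snvPsi_le {v : ℝ} (h0 : 0 ≤ v) : snvPsi v ≤ 2 / 5 := by
  have h3 : (11 / 5 : ℝ) ≤ Real.sqrt (5 + 4 * v) := by
    rw [show (11/5:ℝ) = Real.sqrt ((11/5)^2) by rw [Real.sqrt_sq (by norm_num)]]
    exact Real.sqrt_le_sqrt (by nlinarith)
  unfold snvPsi; linarith

lemma snvPsi_phi {v : ℝ} (h0 : 0 ≤ v) : (snvPsi v) ^ 2 - 3 * snvPsi v + 1 = v := by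
  have h := Real.sq_sqrt (show (0:ℝ) ≤ 5 + 4 * v by linarith)
  unfold snvPsi
  linear_combination h / 4

lemma snvSqrt_diff {v w : ℝ} (hv : 0 ≤ v) (hvw : v ≤ w) :
    Real.sqrt (5 + 4 * w) - Real.sqrt (5 + 4 * v) ≤ w - v := by
  have hA : Real.sqrt (5 + 4 * v) ^ 2 = 5 + 4 * v := Real.sq_sqrt (by linarith)
  have hB : Real.sqrt (5 + 4 * w) ^ 2 = 5 + 4 * w := Real.sq_sqrt (by linarith)
  have hsA : 0 ≤ Real.sqrt (5 + 4 * v) := Real.sqrt_nonneg _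
  have h2A : 2 ≤ Real.sqrt (5 + 4 * v) := by nlinarith
  have hAB : Real.sqrt (5 + 4 * v) ≤ Real.sqrt (5 + 4 * w) :=
    Real.sqrt_le_sqrt (by linarith)
  nlinarith [mul_nonneg (sub_nonneg.2 hAB)
    (show (0:ℝ) ≤ Real.sqrt (5 + 4 * w) + Real.sqrt (5 + 4 * v) - 4 by linarith)]

lemma snvPsi_lip {v w : ℝ} (hv : 0 ≤ v) (hw : 0 ≤ w) :
    |snvPsi v - snvPsi w| ≤ |v - w| / 2 := by
  rcases le_total v w with h | h
  · have h1 := snvSqrt_diff hv h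
    have h2 : Real.sqrt (5 + 4 * v) ≤ Real.sqrt (5 + 4 * w) :=
      Real.sqrt_le_sqrt (by linarith)
    rw [abs_of_nonneg (by unfold snvPsi; linarith), abs_of_nonpos (by linarith)]
    unfold snvPsi; linarith
  · have h1 := snvSqrt_diff hw h
    have h2 : Real.sqrt (5 + 4 * w) ≤ Real.sqrt (5 + 4 * v) :=
      Real.sqrt_le_sqrt (by linarith)
    rw [abs_of_nonpos (by unfold snvPsi; linarith), abs_of_nonneg (by linarith)]
    unfold snvPsi; linarith

lemma snvComp_lip {γ δ t1 t2 s1 s2 D : ℝ}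
    (hγ : 0 ≤ γ) (hγ1 : γ ≤ 1) (hδ : 0 ≤ δ) (hδ1 : δ ≤ 1)
    (ht1 : 0 ≤ t1) (ht1' : t1 ≤ 2/5) (ht2 : 0 ≤ t2) (ht2' : t2 ≤ 2/5)
    (hs1 : 0 ≤ s1) (hs1' : s1 ≤ 2/5) (hs2 : 0 ≤ s2) (hs2' : s2 ≤ 2/5)
    (hD1 : |t1 - s1| ≤ D) (hD2 : |t2 - s2| ≤ D) :
    |snvPsi (γ * t1 ^ 2 + δ * t2 ^ 2) - snvPsi (γ * s1 ^ 2 + δ * s2 ^ 2)| ≤ 4/5 * D := by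
  have hv : 0 ≤ γ * t1 ^ 2 + δ * t2 ^ 2 := by positivity
  have hw : 0 ≤ γ * s1 ^ 2 + δ * s2 ^ 2 := by positivity
  have hvw : |γ * t1 ^ 2 + δ * t2 ^ 2 - (γ * s1 ^ 2 + δ * s2 ^ 2)| ≤ 8/5 * D := by
    have c1 : γ * (t1 + s1) ≤ 4/5 := by nlinarith
    have c2 : δ * (t2 + s2) ≤ 4/5 := by nlinarith
    have b1 : γ * (t1 + s1) * |t1 - s1| ≤ 4/5 * D :=
      mul_le_mul c1 hD1 (abs_nonneg _) (by norm_num)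
    have b2 : δ * (t2 + s2) * |t2 - s2| ≤ 4/5 * D :=
      mul_le_mul c2 hD2 (abs_nonneg _) (by norm_num)
    calc |γ * t1 ^ 2 + δ * t2 ^ 2 - (γ * s1 ^ 2 + δ * s2 ^ 2)|
        = |γ * (t1 + s1) * (t1 - s1) + δ * (t2 + s2) * (t2 - s2)| := by ring_nf
      _ ≤ |γ * (t1 + s1) * (t1 - s1)| + |δ * (t2 + s2) * (t2 - s2)| := abs_add_le _ _
      _ = γ * (t1 + s1) * |t1 - s1| + δ * (t2 + s2) * |t2 - s2| := by
          rw [abs_mul (γ * (t1 + s1)) (t1 - s1), abs_mul (δ * (t2 + s2)) (t2 - s2), abs_of_nonneg (by positivity : (0:ℝ) ≤ γ * (t1 + s1)),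
            abs_of_nonneg (by positivity : (0:ℝ) ≤ δ * (t2 + s2))]
      _ ≤ 4/5 * D + 4/5 * D := add_le_add b1 b2
      _ = 8/5 * D := by ring
  calc |snvPsi (γ * t1 ^ 2 + δ * t2 ^ 2) - snvPsi (γ * s1 ^ 2 + δ * s2 ^ 2)|
      ≤ |γ * t1 ^ 2 + δ * t2 ^ 2 - (γ * s1 ^ 2 + δ * s2 ^ 2)| / 2 := snvPsi_lip hv hw
    _ ≤ 4/5 * D := by linarith
set_option maxHeartbeats 1600000 in
open scoped NNReal in
/-- Every strictly non-Volterra QSO on `S^2`, given by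
`x' = αy² + cz² + 2yz`, `y' = ax² + dz² + 2xz`, `z' = bx² + βy² + 2xy`
with nonnegative parameters, `a+b = c+d = α+β = 1`, has at least one fixed point
in `S^2`, and no fixed point lies on the boundary `∂S^2`. -/
theorem strictly_non_volterra_S2_fixed_points
    (a b c d α β : ℝ)
    (hna : 0 ≤ a) (hnb : 0 ≤ b) (hnc : 0 ≤ c) (hnd : 0 ≤ d)
    (hnα : 0 ≤ α) (hnβ : 0 ≤ β)
    (hab : a + b = 1) (hcd : c + d = 1) (hαβ : α + β = 1)
    (V : ℝ × ℝ × ℝ → ℝ × ℝ × ℝ)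
    (hV : ∀ u : ℝ × ℝ × ℝ,
      V u = (α * u.2.1 ^ 2 + c * u.2.2 ^ 2 + 2 * u.2.1 * u.2.2,
             a * u.1 ^ 2 + d * u.2.2 ^ 2 + 2 * u.1 * u.2.2,
             b * u.1 ^ 2 + β * u.2.1 ^ 2 + 2 * u.1 * u.2.1))
    (S2 : Set (ℝ × ℝ × ℝ))
    (hS2 : S2 = {u : ℝ × ℝ × ℝ |
      0 ≤ u.1 ∧ 0 ≤ u.2.1 ∧ 0 ≤ u.2.2 ∧ u.1 + u.2.1 + u.2.2 = 1}) :
    (∃ u ∈ S2, V u = u) ∧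
      (∀ u ∈ S2, V u = u → 0 < u.1 ∧ 0 < u.2.1 ∧ 0 < u.2.2) := by
  obtain rfl : b = 1 - a := by linarith
  obtain rfl : d = 1 - c := by linarith
  obtain rfl : β = 1 - α := by linarith
  have ha1 : a ≤ 1 := by linarith
  have hc1 : c ≤ 1 := by linarith
  have hα1 : α ≤ 1 := by linarith
  constructor
  · -- existence via the Banach fixed point theorem for an auxiliary contraction
    set K : Set (ℝ × ℝ × ℝ) := Set.Icc (0, 0, 0) (2/5, 2/5, 2/5) with hK
    have memK : ∀ u : ℝ × ℝ × ℝ, u ∈ K ↔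
        (0 ≤ u.1 ∧ u.1 ≤ 2/5) ∧ (0 ≤ u.2.1 ∧ u.2.1 ≤ 2/5) ∧ (0 ≤ u.2.2 ∧ u.2.2 ≤ 2/5) := by
      intro u
      simp only [hK, Set.mem_Icc, Prod.le_def]
      tauto
    set f : ℝ × ℝ × ℝ → ℝ × ℝ × ℝ := fun u =>
      (snvPsi ((1-α) * u.2.1 ^ 2 + (1-c) * u.2.2 ^ 2),
       snvPsi ((1-a) * u.1 ^ 2 + c * u.2.2 ^ 2),
       snvPsi (a * u.1 ^ 2 + α * u.2.1 ^ 2)) with hf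
    have argmem : ∀ γ δ t1 t2 : ℝ, 0 ≤ γ → γ ≤ 1 → 0 ≤ δ → δ ≤ 1 →
        0 ≤ t1 → t1 ≤ 2/5 → 0 ≤ t2 → t2 ≤ 2/5 →
        0 ≤ γ * t1 ^ 2 + δ * t2 ^ 2 ∧ γ * t1 ^ 2 + δ * t2 ^ 2 ≤ 1 := by
      intro γ δ t1 t2 h1 h2 h3 h4 h5 h6 h7 h8
      constructor
      · positivity
      · nlinarith
    have hmaps : Set.MapsTo f K K := by
      intro u hu
      rw [memK] at hu
      obtain ⟨⟨hx0, hx1⟩, ⟨hy0, hy1⟩, ⟨hz0, hz1⟩⟩ := hu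
      rw [memK]
      obtain ⟨p1, p2⟩ := argmem (1-α) (1-c) u.2.1 u.2.2 (by linarith) (by linarith)
        (by linarith) (by linarith) hy0 hy1 hz0 hz1
      obtain ⟨q1, q2⟩ := argmem (1-a) c u.1 u.2.2 (by linarith) (by linarith)
        hnc hc1 hx0 hx1 hz0 hz1
      obtain ⟨r1, r2⟩ := argmem a α u.1 u.2.1 hna ha1 hnα hα1 hx0 hx1 hy0 hy1
      exact ⟨⟨snvPsi_nonneg p1 p2, snvPsi_le p1⟩,
        ⟨snvPsi_nonneg q1 q2, snvPsi_le q1⟩,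
        ⟨snvPsi_nonneg r1 r2, snvPsi_le r1⟩⟩
    have hKcl : IsClosed K := isClosed_Icc
    haveI : CompleteSpace K := hKcl.completeSpace_coe
    haveI : Nonempty K := ⟨⟨(0,0,0), by rw [memK]; norm_num⟩⟩
    set F : K → K := hmaps.restrict f K K with hF
    have hlip : LipschitzWith (4/5 : ℝ≥0) F := by
      apply LipschitzWith.of_dist_le_mul
      intro p q
      have hp := (memK _).1 p.2
      have hq := (memK _).1 q.2
      obtain ⟨⟨hx0, hx1⟩, ⟨hy0, hy1⟩, ⟨hz0, hz1⟩⟩ := hp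
      obtain ⟨⟨hx0', hx1'⟩, ⟨hy0', hy1'⟩, ⟨hz0', hz1'⟩⟩ := hq
      have hd1' : |(p:ℝ×ℝ×ℝ).1 - (q:ℝ×ℝ×ℝ).1| ≤ dist (p:ℝ×ℝ×ℝ) q := by
        rw [Prod.dist_eq, ← Real.dist_eq]
        exact le_max_left _ _
      have hd2' : |(p:ℝ×ℝ×ℝ).2.1 - (q:ℝ×ℝ×ℝ).2.1| ≤ dist (p:ℝ×ℝ×ℝ) q := by
        rw [Prod.dist_eq, ← Real.dist_eq]
        calc dist (p:ℝ×ℝ×ℝ).2.1 (q:ℝ×ℝ×ℝ).2.1 ≤ dist (p:ℝ×ℝ×ℝ).2 (q:ℝ×ℝ×ℝ).2 := by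
              rw [Prod.dist_eq]; exact le_max_left _ _
          _ ≤ _ := le_max_right _ _
      have hd3' : |(p:ℝ×ℝ×ℝ).2.2 - (q:ℝ×ℝ×ℝ).2.2| ≤ dist (p:ℝ×ℝ×ℝ) q := by
        rw [Prod.dist_eq, ← Real.dist_eq]
        calc dist (p:ℝ×ℝ×ℝ).2.2 (q:ℝ×ℝ×ℝ).2.2 ≤ dist (p:ℝ×ℝ×ℝ).2 (q:ℝ×ℝ×ℝ).2 := by
              rw [Prod.dist_eq]; exact le_max_right _ _
          _ ≤ _ := le_max_right _ _
      have e1 := snvComp_lip (show (0:ℝ) ≤ 1-α by linarith) (by linarith)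
        (show (0:ℝ) ≤ 1-c by linarith) (by linarith)
        hy0 hy1 hz0 hz1 hy0' hy1' hz0' hz1' hd2' hd3'
      have e2 := snvComp_lip (show (0:ℝ) ≤ 1-a by linarith) (by linarith)
        hnc hc1 hx0 hx1 hz0 hz1 hx0' hx1' hz0' hz1' hd1' hd3'
      have e3 := snvComp_lip hna ha1 hnα hα1 hx0 hx1 hy0 hy1 hx0' hx1' hy0' hy1' hd1' hd2'
      have hcoe : ((4/5 : ℝ≥0) : ℝ) = 4/5 := by norm_num
      simp only [Subtype.dist_eq]
      rw [hmaps.val_restrict_apply, hmaps.val_restrict_apply, hcoe]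
      rw [hf]
      simp only [Prod.dist_eq, Real.dist_eq]
      exact max_le e1 (max_le e2 e3)
    have hcontr : ContractingWith (4/5 : ℝ≥0) F :=
      ⟨by exact_mod_cast (by norm_num : (4/5 : ℝ) < 1), hlip⟩
    have hex : ∃ w : ℝ × ℝ × ℝ, w ∈ K ∧ f w = w := by
      obtain ⟨pt, hpt⟩ : ∃ pt : K, F pt = pt := ⟨_, hcontr.fixedPoint_isFixedPt⟩
      refine ⟨pt.1, pt.2, ?_⟩
      conv_rhs => rw [← hpt]
      rw [hmaps.val_restrict_apply]
    obtain ⟨⟨x, y, z⟩, hmem, hfw⟩ := hex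
    obtain ⟨⟨hx0, hx1⟩, ⟨hy0, hy1⟩, ⟨hz0, hz1⟩⟩ := (memK _).1 hmem
    rw [hf] at hfw
    simp only [Prod.mk.injEq] at hfw
    obtain ⟨hxx, hyy, hzz⟩ := hfw
    simp only at hxx hyy hzz hx0 hx1 hy0 hy1 hz0 hz1
    have a1 : 0 ≤ (1-α) * y ^ 2 + (1-c) * z ^ 2 := by
      have := sq_nonneg y; have := sq_nonneg z; nlinarith
    have a2 : 0 ≤ (1-a) * x ^ 2 + c * z ^ 2 := by
      have := sq_nonneg x; have := sq_nonneg z; nlinarith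
    have a3 : 0 ≤ a * x ^ 2 + α * y ^ 2 := by positivity
    have e1 : x ^ 2 - 3 * x + 1 = (1-α) * y ^ 2 + (1-c) * z ^ 2 := by
      rw [← hxx]; exact snvPsi_phi a1
    have e2 : y ^ 2 - 3 * y + 1 = (1-a) * x ^ 2 + c * z ^ 2 := by
      rw [← hyy]; exact snvPsi_phi a2
    have e3 : z ^ 2 - 3 * z + 1 = a * x ^ 2 + α * y ^ 2 := by
      rw [← hzz]; exact snvPsi_phi a3
    have hs : x + y + z = 1 := by
      linear_combination (-1/3 : ℝ) * e1 + (-1/3 : ℝ) * e2 + (-1/3 : ℝ) * e3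
    refine ⟨(x, y, z), ?_, ?_⟩
    · rw [hS2]; exact ⟨hx0, hy0, hz0, hs⟩
    · rw [hV]
      refine Prod.ext ?_ (Prod.ext ?_ ?_)
      · show α * y ^ 2 + c * z ^ 2 + 2 * y * z = x
        linear_combination e1/2 - e2/2 - e3/2 - ((1 + 2*x - 2*y - 2*z)/2) * hs
      · show a * x ^ 2 + (1-c) * z ^ 2 + 2 * x * z = y
        linear_combination e2/2 - e1/2 - e3/2 - ((1 + 2*y - 2*x - 2*z)/2) * hs
      · show (1-a) * x ^ 2 + (1-α) * y ^ 2 + 2 * x * y = z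
        linear_combination e3/2 - e1/2 - e2/2 - ((1 + 2*z - 2*x - 2*y)/2) * hs
  · -- no fixed point on the boundary
    intro u hu hVu
    obtain ⟨x, y, z⟩ := u
    rw [hS2] at hu
    simp only [Set.mem_setOf_eq] at hu
    obtain ⟨hx0, hy0, hz0, hs⟩ := hu
    rw [hV] at hVu
    simp only [Prod.mk.injEq] at hVu
    obtain ⟨ex, ey, ez⟩ := hVu
    simp only at ex ey ez hs ⊢
    refine ⟨?_, ?_, ?_⟩
    · rcases hx0.lt_or_eq with h | h
      · exact h
      · exfalso
        obtain rfl : x = 0 := h.symm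
        have hyz : y * z = 0 := by
          nlinarith [mul_nonneg hnα (sq_nonneg y), mul_nonneg hnc (sq_nonneg z),
            mul_nonneg hy0 hz0]
        rcases mul_eq_zero.1 hyz with h' | h'
        · obtain rfl : y = 0 := h'
          obtain rfl : z = 1 := by linarith
          norm_num at ex ey
          linarith
        · obtain rfl : z = 0 := h'
          obtain rfl : y = 1 := by linarith
          norm_num at ex ez
          linarith
    · rcases hy0.lt_or_eq with h | h
      · exact h
      · exfalso
        obtain rfl : y = 0 := h.symm
        have hxz : x * z = 0 := by
          nlinarith [mul_nonneg hna (sq_nonneg x),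
            mul_nonneg (show (0:ℝ) ≤ 1 - c by linarith) (sq_nonneg z),
            mul_nonneg hx0 hz0]
        rcases mul_eq_zero.1 hxz with h' | h'
        · obtain rfl : x = 0 := h'
          obtain rfl : z = 1 := by linarith
          norm_num at ey ex
          linarith
        · obtain rfl : z = 0 := h'
          obtain rfl : x = 1 := by linarith
          norm_num at ey ez
          linarith
    · rcases hz0.lt_or_eq with h | h
      · exact h
      · exfalso
        obtain rfl : z = 0 := h.symm
        have hxy : x * y = 0 := by
          nlinarith [mul_nonneg (show (0:ℝ) ≤ 1 - a by linarith) (sq_nonneg x),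
            mul_nonneg (show (0:ℝ) ≤ 1 - α by linarith) (sq_nonneg y),
            mul_nonneg hx0 hy0]
        rcases mul_eq_zero.1 hxy with h' | h'
        · obtain rfl : x = 0 := h'
          obtain rfl : y = 1 := by linarith
          norm_num at ez ex
          linarith
        · obtain rfl : y = 0 := h'
          obtain rfl : x = 1 := by linarith
          norm_num at ez ey
          linarith
end

section
/- If V: S^{m-1} → S^{m-1} is a bistochastic quadratic operator (V(x) ≺ x for all x), then its coefficients satisfy Σ_{i,j=1}^m P_{ij,k} = m for every k. -/
/-- `x ≺ y`: for every `t`, the sum of any `t` coordinates of `x` is at most the sum of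
some `t` coordinates of `y` (equivalently, the sum of the `t` largest coordinates of `x`
is at most the sum of the `t` largest coordinates of `y`). -/
def IsMajorizedBy {m : ℕ} (x y : Fin m → ℝ) : Prop :=
  ∀ A : Finset (Fin m), ∃ B : Finset (Fin m),
    B.card = A.card ∧ ∑ i ∈ A, x i ≤ ∑ i ∈ B, y i

/-!
Evaluate `V` at the barycentre `u = (1/m, …, 1/m)`. A vector majorized by a constant vector
has every coordinate at most that constant, and `V u` has the same total mass `1` as `u`, so
`V u = u`. Reading off the `k`-th coordinate, `V u k = (∑ i, ∑ j, P i j k) / m²`, gives the claim.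
-/

open Finset

namespace IsMajorizedBy

variable {m : ℕ} {x : Fin m → ℝ} {c : ℝ}

theorem le_of_const (h : IsMajorizedBy x fun _ => c) (k : Fin m) : x k ≤ c := by
  obtain ⟨B, hB, hle⟩ := h {k}
  simpa [hB] using hle

theorem eq_const (h : IsMajorizedBy x fun _ => c) (hx : ∑ i, x i = m * c) :
    x = fun _ => c := by
  have hsum : ∑ i, x i = ∑ _i : Fin m, c := by simpa using hx
  funext k
  exact (sum_eq_sum_iff_of_le fun i _ => h.le_of_const i).mp hsum k (mem_univ k)

end IsMajorizedBy

theorem sum_quadratic_eq_sq_sum {ι : Type*} [Fintype ι] (P : ι → ι → ι → ℝ)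
    (hsum : ∀ i j, ∑ k, P i j k = 1) (x : ι → ℝ) :
    ∑ k, ∑ i, ∑ j, P i j k * x i * x j = (∑ i, x i) ^ 2 := by
  calc ∑ k, ∑ i, ∑ j, P i j k * x i * x j
      = ∑ i, ∑ j, (∑ k, P i j k) * x i * x j := by
        rw [sum_comm]
        refine sum_congr rfl fun i _ => ?_
        rw [sum_comm]
        simp only [sum_mul]
    _ = (∑ i, x i) ^ 2 := by simp only [hsum, one_mul, sq, sum_mul_sum]

theorem bistochastic_qso_coefficient_sum_general (m : ℕ)
    (P : Fin m → Fin m → Fin m → ℝ)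
    (hsum : ∀ i j, ∑ k, P i j k = 1)
    (V : (Fin m → ℝ) → (Fin m → ℝ))
    (hV : ∀ x k, V x k = ∑ i, ∑ j, P i j k * x i * x j)
    (hbis : ∀ x : Fin m → ℝ, ((∀ i, 0 ≤ x i) ∧ ∑ i, x i = 1) →
      IsMajorizedBy (V x) x) :
    ∀ k, ∑ i, ∑ j, P i j k = (m : ℝ) := by
  intro k
  have hm : (m : ℝ) ≠ 0 := Nat.cast_ne_zero.mpr (Fin.pos_iff_nonempty.mpr ⟨k⟩).ne'
  set u : Fin m → ℝ := fun _ => (m : ℝ)⁻¹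
  have hu_mass : ∑ i, u i = 1 := by simp [u, hm]
  have hVu_mass : ∑ i, V u i = m * (m : ℝ)⁻¹ := by
    simp only [hV, sum_quadratic_eq_sq_sum P hsum, hu_mass, one_pow, mul_inv_cancel₀ hm]
  have hVu : V u k = (m : ℝ)⁻¹ :=
    congrFun ((hbis u ⟨fun _ => by positivity, hu_mass⟩).eq_const hVu_mass) k
  have hVu_coeff : V u k = (∑ i, ∑ j, P i j k) * (m : ℝ)⁻¹ ^ 2 := by
    simp only [hV, u, sum_mul, sq, mul_assoc]
  rw [hVu_coeff] at hVu
  field_simp at hVu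
  linarith

/-- If `V` is a bistochastic quadratic operator (`V(x) ≺ x` for all
`x ∈ S^{m-1}`), then `∑_{i,j} P_{ij,k} = m` for every `k`. -/
theorem bistochastic_qso_coefficient_sum (m : ℕ)
    (P : Fin m → Fin m → Fin m → ℝ)
    (hpos : ∀ i j k, 0 ≤ P i j k)
    (hsym : ∀ i j k, P i j k = P j i k)
    (hsum : ∀ i j, ∑ k, P i j k = 1)
    (V : (Fin m → ℝ) → (Fin m → ℝ))
    (hV : ∀ x k, V x k = ∑ i, ∑ j, P i j k * x i * x j)
    (hbis : ∀ x : Fin m → ℝ, ((∀ i, 0 ≤ x i) ∧ ∑ i, x i = 1) →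
      IsMajorizedBy (V x) x) :
    ∀ k, ∑ i, ∑ j, P i j k = (m : ℝ) :=
  bistochastic_qso_coefficient_sum_general m P hsum V hV hbis
end

section
/- Let V: S^{m-1} → S^{m-1} be a bistochastic quadratic operator, i.e. V(x) ≺ x for all x ∈ S^{m-1}. Then for every subset I ⊆ {1,...,m} with |I| = t and every k ∈ {1,...,m}, Σ_{i,j∈I} P_{ij,k} ≤ t. -/
/-- If `V(x) ≺ x` for all `x ∈ S^{m-1}`, then for every subset
`I ⊆ {1,...,m}` with `|I| = t` and every `k`, `∑_{i,j ∈ I} P_{ij,k} ≤ t`. -/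
theorem bistochastic_qso_subset_condition (m : ℕ)
    (P : Fin m → Fin m → Fin m → ℝ)
    (hpos : ∀ i j k, 0 ≤ P i j k)
    (hsym : ∀ i j k, P i j k = P j i k)
    (hsum : ∀ i j, ∑ k, P i j k = 1)
    (V : (Fin m → ℝ) → (Fin m → ℝ))
    (hV : ∀ x k, V x k = ∑ i, ∑ j, P i j k * x i * x j)
    (hbis : ∀ x : Fin m → ℝ, ((∀ i, 0 ≤ x i) ∧ ∑ i, x i = 1) →
      IsMajorizedBy (V x) x) :
    ∀ (I : Finset (Fin m)) (k : Fin m),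
      ∑ i ∈ I, ∑ j ∈ I, P i j k ≤ (I.card : ℝ) := by
  intro I k
  rcases Nat.eq_zero_or_pos I.card with h0 | hcard
  · have : I = ∅ := Finset.card_eq_zero.mp h0
    simp [this]
  · set t : ℝ := (I.card : ℝ) with ht
    have htpos : 0 < t := by rw [ht]; exact_mod_cast hcard
    set x : Fin m → ℝ := fun i => if i ∈ I then 1 / t else 0 with hx
    have hx0 : ∀ i, 0 ≤ x i := by
      intro i; rw [hx]; dsimp only; split_ifs
      · positivity
      · exact le_rfl
    have hxsum : ∑ i, x i = 1 := by
      rw [hx]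
      rw [Finset.sum_ite_mem, Finset.univ_inter, Finset.sum_const, nsmul_eq_mul]
      field_simp
      try rfl
    have hVx : V x k = ∑ i ∈ I, ∑ j ∈ I, P i j k * (1 / t) * (1 / t) := by
      rw [hV]
      rw [← Finset.sum_subset I.subset_univ (fun i _ hi => by simp [hx, hi])]
      refine Finset.sum_congr rfl (fun i hi => ?_)
      rw [← Finset.sum_subset I.subset_univ (fun j _ hj => by simp [hx, hj])]
      refine Finset.sum_congr rfl (fun j hj => ?_)
      rw [hx]; simp [hi, hj]
    obtain ⟨B, hBcard, hle⟩ := hbis x ⟨hx0, hxsum⟩ {k}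
    rw [Finset.card_singleton] at hBcard
    obtain ⟨i0, rfl⟩ := Finset.card_eq_one.mp hBcard
    simp only [Finset.sum_singleton] at hle
    have hxi0 : x i0 ≤ 1 / t := by
      rw [hx]; dsimp only; split_ifs
      · exact le_rfl
      · positivity
    have hkey : V x k ≤ 1 / t := le_trans hle hxi0
    have hfac : ∑ i ∈ I, ∑ j ∈ I, P i j k = t * t * V x k := by
      rw [hVx, Finset.mul_sum]
      refine Finset.sum_congr rfl (fun i _ => ?_)
      rw [Finset.mul_sum]
      refine Finset.sum_congr rfl (fun j _ => ?_)
      field_simp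
    rw [hfac, ht]
    calc t * t * V x k ≤ t * t * (1 / t) := by
          apply mul_le_mul_of_nonneg_left hkey (by positivity)
      _ = t := by field_simp
end

section
/- The QSO constructed from a graph G and strictly positive measure μ via P_{σ₁σ₂,σ} = μ(σ)/μ(Ω(G,σ₁,σ₂))·1[σ ∈ Ω(G,σ₁,σ₂)] is a Volterra QSO (P_{σ₁σ₂,σ} = 0 whenever σ ∉ {σ₁,σ₂}) if and only if the graph G is connected. -/
open Classical

namespace SimpleGraph

variable {V α : Type*} (G : SimpleGraph V)

/-- The paper's `Ω(G, σ₁, σ₂)`. -/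
def componentwiseMix (σ₁ σ₂ : V → α) : Set (V → α) :=
  {σ | ∀ x, (∀ y, G.Reachable x y → σ y = σ₁ y) ∨ (∀ y, G.Reachable x y → σ y = σ₂ y)}

variable {G}

theorem Preconnected.componentwiseMix_subset [Nonempty V] (hG : G.Preconnected)
    (σ₁ σ₂ : V → α) : G.componentwiseMix σ₁ σ₂ ⊆ {σ₁, σ₂} := by
  intro σ hσ
  obtain ⟨x⟩ := ‹Nonempty V›
  rcases hσ x with h | h
  · exact .inl (funext fun y => h y (hG x y))
  · exact .inr (funext fun y => h y (hG x y))

/-- The witness is `a` on the component of a vertex `x` not reaching all of `V`, `b` elsewhere. -/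
theorem exists_mem_componentwiseMix_ne_of_not_preconnected (hG : ¬ G.Preconnected) {a b : α}
    (hab : a ≠ b) : ∃ σ ∈ G.componentwiseMix (fun _ => a) (fun _ => b),
      σ ≠ (fun _ => a) ∧ σ ≠ (fun _ => b) := by
  simp only [Preconnected, not_forall] at hG
  obtain ⟨x, z, hxz⟩ := hG
  refine ⟨fun y => if G.Reachable x y then a else b, fun w => ?_, fun h => ?_, fun h => ?_⟩
  · by_cases hw : G.Reachable x w
    · exact .inl fun y hwy => if_pos (hw.trans hwy)
    · exact .inr fun y hwy => if_neg fun hxy => hw (hxy.trans hwy.symm)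
  · exact hab (by simpa [hxz] using (congrFun h z).symm)
  · exact hab (by simpa using congrFun h x)

theorem preconnected_iff_componentwiseMix_subset [Nonempty V] [Nontrivial α] :
    G.Preconnected ↔ ∀ σ₁ σ₂ : V → α, G.componentwiseMix σ₁ σ₂ ⊆ {σ₁, σ₂} := by
  refine ⟨fun hG => hG.componentwiseMix_subset, fun h => ?_⟩
  by_contra hG
  obtain ⟨a, b, hab⟩ := exists_pair_ne α
  obtain ⟨σ, hσ, hσa, hσb⟩ := exists_mem_componentwiseMix_ne_of_not_preconnected hG hab
  rcases h _ _ hσ with h | h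
  exacts [hσa h, hσb h]

end SimpleGraph

theorem ite_div_sum_filter_eq_zero_iff {ι : Type*} [Fintype ι] {μ : ι → ℝ} (hμ : ∀ i, 0 < μ i)
    (S : Set ι) (i : ι) :
    (if i ∈ S then μ i / ∑ j ∈ Finset.univ.filter (· ∈ S), μ j else 0) = 0 ↔ i ∉ S := by
  split_ifs with hi
  · have hsum : 0 < ∑ j ∈ Finset.univ.filter (· ∈ S), μ j :=
      Finset.sum_pos (fun j _ => hμ j) ⟨i, by simpa using hi⟩
    simp only [div_eq_zero_iff, (hμ i).ne', hsum.ne', or_self, not_true_eq_false, hi]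
  · simp only [hi, not_false_eq_true]

theorem gibbs_qso_volterra_iff_connected_general
    (Λ Φ : Type*) [Fintype Λ] [Fintype Φ] [DecidableEq Λ]
    [Nonempty Λ] (hΦ : 1 < Fintype.card Φ)
    (G : SimpleGraph Λ)
    (μ : (Λ → Φ) → ℝ)
    (hμpos : ∀ σ, 0 < μ σ)
    (OmegaG : (Λ → Φ) → (Λ → Φ) → Set (Λ → Φ))
    (hOmega : ∀ σ₁ σ₂, OmegaG σ₁ σ₂ =
      {σ | ∀ x : Λ, (∀ y, G.Reachable x y → σ y = σ₁ y) ∨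
                    (∀ y, G.Reachable x y → σ y = σ₂ y)})
    (P : (Λ → Φ) → (Λ → Φ) → (Λ → Φ) → ℝ)
    (hP : ∀ σ₁ σ₂ σ, P σ₁ σ₂ σ =
      if σ ∈ OmegaG σ₁ σ₂ then
        μ σ / ∑ τ ∈ Finset.univ.filter (· ∈ OmegaG σ₁ σ₂), μ τ
      else 0) :
    (∀ σ₁ σ₂ σ : Λ → Φ, σ ≠ σ₁ → σ ≠ σ₂ → P σ₁ σ₂ σ = 0) ↔ G.Connected := by
  have : Nontrivial Φ := Fintype.one_lt_card_iff_nontrivial.mp hΦ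
  have hP_eq_zero : ∀ σ₁ σ₂ σ, P σ₁ σ₂ σ = 0 ↔ σ ∉ G.componentwiseMix σ₁ σ₂ := fun σ₁ σ₂ σ => by
    rw [hP, ite_div_sum_filter_eq_zero_iff hμpos, hOmega, SimpleGraph.componentwiseMix]
  rw [SimpleGraph.connected_iff, and_iff_left ‹Nonempty Λ›,
    SimpleGraph.preconnected_iff_componentwiseMix_subset (α := Φ)]
  simp only [hP_eq_zero, Set.subset_def, Set.mem_insert_iff, Set.mem_singleton_iff]
  refine forall₂_congr fun σ₁ σ₂ => forall_congr' fun σ => ?_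
  tauto

/-- The QSO constructed from a graph `G` and a strictly positive measure
`μ` is Volterra (`P_{σ₁σ₂,σ} = 0` whenever `σ ∉ {σ₁,σ₂}`) if and only if `G` is
connected. (Here `|Λ| ≥ 1` and `|Φ| ≥ 2`.) -/
theorem gibbs_qso_volterra_iff_connected
    (Λ Φ : Type*) [Fintype Λ] [Fintype Φ] [DecidableEq Λ]
    [Nonempty Λ] (hΦ : 1 < Fintype.card Φ)
    (G : SimpleGraph Λ)
    (μ : (Λ → Φ) → ℝ)
    (hμpos : ∀ σ, 0 < μ σ) (hμsum : ∑ σ : Λ → Φ, μ σ = 1)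
    (OmegaG : (Λ → Φ) → (Λ → Φ) → Set (Λ → Φ))
    (hOmega : ∀ σ₁ σ₂, OmegaG σ₁ σ₂ =
      {σ | ∀ x : Λ, (∀ y, G.Reachable x y → σ y = σ₁ y) ∨
                    (∀ y, G.Reachable x y → σ y = σ₂ y)})
    (P : (Λ → Φ) → (Λ → Φ) → (Λ → Φ) → ℝ)
    (hP : ∀ σ₁ σ₂ σ, P σ₁ σ₂ σ =
      if σ ∈ OmegaG σ₁ σ₂ then
        μ σ / ∑ τ ∈ Finset.univ.filter (· ∈ OmegaG σ₁ σ₂), μ τ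
      else 0) :
    (∀ σ₁ σ₂ σ : Λ → Φ, σ ≠ σ₁ → σ ≠ σ₂ → P σ₁ σ₂ σ = 0) ↔ G.Connected :=
  gibbs_qso_volterra_iff_connected_general Λ Φ hΦ G μ hμpos OmegaG hOmega P hP
end

section
/- For a Volterra QSO on S^1 (m = 2), V(x₁,x₂) = (x₁(1 + a x₂), x₂(1 − a x₁)) with a ∈ [−1,1]; if a > 0 then for any initial point with x₁⁰ ∈ (0,1), the trajectory x₁^{(n)} is strictly increasing and converges to 1. -/
open Filter

/-- For the Volterra QSO `V(x₁,x₂) = (x₁(1 + a x₂), x₂(1 - a x₁))` on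
`S^1` with `a ∈ (0,1]`, for any initial point with `x₁⁰ ∈ (0,1)` the trajectory
`x₁^{(n)}` is strictly increasing and converges to `1`. -/
theorem volterra_S1_trajectory_increases_to_one
    (a : ℝ) (ha : 0 < a) (ha1 : a ≤ 1)
    (V : ℝ × ℝ → ℝ × ℝ)
    (hV : ∀ u : ℝ × ℝ, V u = (u.1 * (1 + a * u.2), u.2 * (1 - a * u.1)))
    (x : ℝ × ℝ) (hx1 : 0 < x.1) (hx1' : x.1 < 1) (hxs : x.1 + x.2 = 1) :
    StrictMono (fun n : ℕ => (V^[n] x).1) ∧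
      Tendsto (fun n : ℕ => (V^[n] x).1) atTop (nhds 1) := by
  set f : ℝ → ℝ := fun t => t * (1 + a * (1 - t)) with hf
  set y : ℕ → ℝ := fun n => (V^[n] x).1 with hy
  have hfval : ∀ t : ℝ, f t = t * (1 + a * (1 - t)) := fun t => rfl
  -- structure of iterates
  have key : ∀ n : ℕ, (V^[n] x) = (y n, 1 - y n) ∧ 0 < y n ∧ y n < 1 ∧
      y (n + 1) = f (y n) := by
    intro n
    induction n with
    | zero =>
      have hx2 : x.2 = 1 - x.1 := by linarith
      refine ⟨?_, hx1, hx1', ?_⟩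
      · show x = (x.1, 1 - x.1)
        refine Prod.ext rfl ?_
        show x.2 = 1 - x.1
        exact hx2
      · show (V^[0+1] x).1 = f x.1
        have h1 : V^[0+1] x = V x := by simp
        rw [h1, hV, hfval]
        simp only
        rw [hx2]
    | succ n ih =>
      obtain ⟨heq, h0, h1, hstep⟩ := ih
      have hit : V^[n+1] x = V (V^[n] x) := Function.iterate_succ_apply' V n x
      have hVval : V (V^[n] x) = (f (y n), (1 - y n) * (1 - a * y n)) := by
        rw [heq, hV, hfval]
      have hfn : y (n+1) = f (y n) := hstep
      have hsum : (1 - y n) * (1 - a * y n) = 1 - f (y n) := by rw [hfval]; ring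
      have hpos1 : 0 < a * (1 - y n) := mul_pos ha (by linarith)
      have hay : a * y n ≤ y n := by nlinarith [mul_nonneg (sub_nonneg.mpr ha1) h0.le]
      have h0' : 0 < f (y n) := by
        rw [hfval]
        exact mul_pos h0 (by linarith)
      have h1' : f (y n) < 1 := by
        rw [hfval]
        nlinarith [mul_pos (show (0:ℝ) < 1 - y n by linarith) (show (0:ℝ) < 1 - a * y n by linarith)]
      refine ⟨?_, ?_, ?_, ?_⟩
      · rw [hit, hVval, hfn, hsum]
      · rw [hfn]; exact h0'
      · rw [hfn]; exact h1'
      · show y (n+2) = f (y (n+1))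
        have hit2 : V^[n+2] x = V (V^[n+1] x) := Function.iterate_succ_apply' V (n+1) x
        have heq1 : V^[n+1] x = (y (n+1), 1 - y (n+1)) := by
          rw [hit, hVval, hfn, hsum]
        have hV2 : V (V^[n+1] x) = (f (y (n+1)), (1 - y (n+1)) * (1 - a * y (n+1))) := by
          rw [heq1, hV, hfval]
        show (V^[n+2] x).1 = f (y (n+1))
        rw [hit2, hV2]
  have hlt : ∀ n, y n < y (n+1) := by
    intro n
    obtain ⟨_, h0, h1, hstep⟩ := key n
    rw [hstep, hfval]
    nlinarith [mul_pos (mul_pos ha h0) (show (0:ℝ) < 1 - y n by linarith)]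
  have hmono : StrictMono y := strictMono_nat_of_lt_succ hlt
  refine ⟨hmono, ?_⟩
  have hbdd : BddAbove (Set.range y) := by
    refine ⟨1, ?_⟩
    rintro _ ⟨n, rfl⟩
    exact le_of_lt (key n).2.2.1
  have hL : Tendsto y atTop (nhds (⨆ n, y n)) :=
    tendsto_atTop_ciSup hmono.monotone hbdd
  set L := ⨆ n, y n with hLdef
  have hL1 : L ≤ 1 := ciSup_le fun n => le_of_lt (key n).2.2.1
  have hL0 : 0 < L := lt_of_lt_of_le hx1 (le_ciSup hbdd 0)
  have hshift : Tendsto (fun n => y (n+1)) atTop (nhds L) :=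
    hL.comp (tendsto_add_atTop_nat 1)
  have hcont : Continuous f := by
    have : f = fun t : ℝ => t * (1 + a * (1 - t)) := rfl
    rw [this]
    exact continuous_id.mul
      (continuous_const.add (continuous_const.mul (continuous_const.sub continuous_id)))
  have hfL : Tendsto (fun n => f (y n)) atTop (nhds (f L)) :=
    (hcont.tendsto L).comp hL
  have heqseq : (fun n => y (n+1)) = fun n => f (y n) := by
    funext n; exact (key n).2.2.2
  have hfix : f L = L := by
    rw [heqseq] at hshift
    exact tendsto_nhds_unique hfL hshift
  have hLone : L = 1 := by
    rw [hfval] at hfix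
    have h0 : a * L * (1 - L) = 0 := by nlinarith
    rcases mul_eq_zero.mp h0 with h | h
    · rcases mul_eq_zero.mp h with h' | h'
      · linarith
      · linarith
    · linarith
  rw [← hLone]
  exact hL
end
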